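/- For every fixed integer s ≥ 2 there exist constants c₁ > 0, c₂ > 0 and a threshold m₀ such that for all m ≥ m₀, c₁ · log₂ m ≤ L_min(s,m) ≤ c₂ · log₂ m; i.e., for fixed s the minimal stuck-at redundancy of the mask set grows as Θ(log m) = Θ(log log n) in the code length n = 2^m. -/

import Mathlib

/-- The recursively constructed mask set `M(s, m)`, viewed as a set of vectors of
length `2^m` indexed by the points of `𝔽₂^m` (i.e. functions `(Fin m → ZMod 2) → ZMod 2`).
For a point `p : Fin (m+1) → ZMod 2`, the coordinate `p 0` selects the half
(left half for `p 0 = 0`) and `Fin.tail p` the position inside that half, so that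
the concatenation `[x, y]` corresponds to
`fun p => if p 0 = 0 then x (Fin.tail p) else y (Fin.tail p)`. -/
def maskSet : (m : ℕ) → ℕ → Set ((Fin m → ZMod 2) → ZMod 2)
  | 0, _ => Set.univ
  | m + 1, s =>
    if s ≤ 1 then {fun _ => 0, fun _ => 1}
    else if m + 1 ≤ Nat.clog 2 s then Set.univ
    else
      ((fun g : (Fin m → ZMod 2) → ZMod 2 => fun p => g (Fin.tail p)) '' maskSet m s) ∪
        ⋃ i ∈ Finset.Ico 1 s,
          {f | ∃ x ∈ maskSet m i, ∃ y ∈ maskSet m (s - i),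
            f = fun p => if p 0 = 0 then x (Fin.tail p) else y (Fin.tail p)}

/-- A finite set `L` of coordinate positions is a label set for (distinguishes) `S`
if distinct vectors of `S` have distinct restrictions to `L`. -/
def Distinguishes {ι : Type*} (L : Finset ι) (S : Set (ι → ZMod 2)) : Prop :=
  ∀ x ∈ S, ∀ y ∈ S, (∀ i ∈ L, x i = y i) → x = y

/-- `L_min(s, m)`: the minimum cardinality of a label set for `M(s, m)`. -/
noncomputable def Lmin (s m : ℕ) : ℕ :=
  sInf {k | ∃ L : Finset (Fin m → ZMod 2), L.card = k ∧ Distinguishes L (maskSet m s)}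

lemma zmod2_cases : ∀ a : ZMod 2, a = 0 ∨ a = 1 := by decide

lemma const_mem (m s : ℕ) (hs : 1 ≤ s) (a : ZMod 2) :
    (fun _ => a) ∈ maskSet m s := by
  induction m with
  | zero => exact Set.mem_univ _
  | succ m ih =>
    rw [maskSet]
    by_cases h1 : s ≤ 1
    · rw [if_pos h1]
      rcases zmod2_cases a with h | h <;> subst h
      · exact Set.mem_insert _ _
      · exact Set.mem_insert_of_mem _ rfl
    · rw [if_neg h1]
      by_cases h2 : m + 1 ≤ Nat.clog 2 s
      · rw [if_pos h2]; exact Set.mem_univ _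
      · rw [if_neg h2]
        exact Set.mem_union_left _ ⟨fun _ => a, ih, rfl⟩

lemma maskSet_mono (m : ℕ) : ∀ {s s' : ℕ}, s ≤ s' → maskSet m s ⊆ maskSet m s' := by
  induction m with
  | zero => intro s s' _; exact fun v _ => Set.mem_univ _
  | succ m ih =>
    intro s s' hss v hv
    rw [maskSet] at hv ⊢
    by_cases h1' : s' ≤ 1
    · rw [if_pos (le_trans hss h1')] at hv; rw [if_pos h1']; exact hv
    · rw [if_neg h1']
      by_cases h2' : m + 1 ≤ Nat.clog 2 s'
      · rw [if_pos h2']; exact Set.mem_univ _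
      · rw [if_neg h2']
        by_cases h1 : s ≤ 1
        · -- v is a constant
          rw [if_pos h1] at hv
          rcases hv with h | h
          · subst h
            exact Set.mem_union_left _ ⟨fun _ => 0, const_mem m s' (by omega) 0, rfl⟩
          · rw [Set.mem_singleton_iff] at h; subst h
            exact Set.mem_union_left _ ⟨fun _ => 1, const_mem m s' (by omega) 1, rfl⟩
        · rw [if_neg h1] at hv
          have h2 : ¬ (m + 1 ≤ Nat.clog 2 s) := by
            intro hc
            exact h2' (le_trans hc (Nat.clog_mono_right 2 hss))
          rw [if_neg h2] at hv
          rcases hv with ⟨g, hg, hgv⟩ | hv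
          · exact Set.mem_union_left _ ⟨g, ih hss hg, hgv⟩
          · refine Set.mem_union_right _ ?_
            simp only [Set.mem_iUnion] at hv ⊢
            obtain ⟨i, hi, x, hx, y, hy, hf⟩ := hv
            simp only [Finset.mem_Ico] at hi
            exact ⟨i, by simp only [Finset.mem_Ico]; omega, x, hx, y,
              ih (show s - i ≤ s' - i by omega) hy, hf⟩

example : True := trivial

lemma coord_mem (m : ℕ) : ∀ (s : ℕ), 2 ≤ s → ∀ k : Fin m,
    (fun p => p k) ∈ maskSet m s := by
  induction m with
  | zero => intro s _ k; exact k.elim0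
  | succ m ih =>
    intro s hs k
    rw [maskSet, if_neg (by omega : ¬ s ≤ 1)]
    by_cases h2 : m + 1 ≤ Nat.clog 2 s
    · rw [if_pos h2]; exact Set.mem_univ _
    · rw [if_neg h2]
      rcases Fin.eq_zero_or_eq_succ k with hk | ⟨j, hk⟩
      · subst hk
        refine Set.mem_union_right _ ?_
        simp only [Set.mem_iUnion]
        refine ⟨1, by simp only [Finset.mem_Ico]; omega,
          fun _ => 0, const_mem m 1 le_rfl 0,
          fun _ => 1, const_mem m (s-1) (by omega) 1, ?_⟩
        funext p
        rcases zmod2_cases (p 0) with h | h <;> simp [h]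
      · subst hk
        refine Set.mem_union_left _ ⟨fun q => q j, ih s hs j, ?_⟩
        rfl

lemma junta (m : ℕ) : ∀ (s : ℕ) (v : (Fin m → ZMod 2) → ZMod 2), 1 ≤ s →
    v ∈ maskSet m s →
    ∃ R : Finset (Fin m), R.card ≤ 2 * s - 1 ∧
      ∀ p q : Fin m → ZMod 2, (∀ i ∈ R, p i = q i) → v p = v q := by
  induction m with
  | zero =>
    intro s v _ _
    exact ⟨∅, by simp, fun p q _ => by rw [Subsingleton.elim p q]⟩
  | succ m ih =>
    intro s v hs hv
    rw [maskSet] at hv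
    by_cases h1 : s ≤ 1
    · rw [if_pos h1] at hv
      rcases hv with h | h
      · exact ⟨∅, by simp, by subst h; intro p q _; rfl⟩
      · rw [Set.mem_singleton_iff] at h
        exact ⟨∅, by simp, by subst h; intro p q _; rfl⟩
    · rw [if_neg h1] at hv
      by_cases h2 : m + 1 ≤ Nat.clog 2 s
      · rw [if_pos h2] at hv
        refine ⟨Finset.univ, ?_, fun p q hpq => ?_⟩
        · have hclog : Nat.clog 2 s ≤ s := by
            rw [Nat.clog_le_iff_le_pow (by norm_num)]
            exact Nat.le_of_lt (Nat.lt_two_pow_self (n := s))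
          simpa using by omega
        · have : p = q := funext fun i => hpq i (Finset.mem_univ i)
          rw [this]
      · rw [if_neg h2] at hv
        rcases hv with ⟨g, hg, hgv⟩ | hv
        · obtain ⟨R, hR, hprop⟩ := ih s g hs hg
          refine ⟨R.image Fin.succ, le_trans (Finset.card_image_le) hR, ?_⟩
          subst hgv
          intro p q hpq
          exact hprop _ _ fun i hi => hpq i.succ (Finset.mem_image_of_mem _ hi)
        · simp only [Set.mem_iUnion] at hv
          obtain ⟨i, hi, x, hx, y, hy, hf⟩ := hv
          simp only [Finset.mem_Ico] at hi
          obtain ⟨Rx, hRx, hpx⟩ := ih i x (by omega) hx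
          obtain ⟨Ry, hRy, hpy⟩ := ih (s - i) y (by omega) hy
          refine ⟨insert 0 (Rx.image Fin.succ ∪ Ry.image Fin.succ), ?_, ?_⟩
          · calc (insert 0 (Rx.image Fin.succ ∪ Ry.image Fin.succ)).card
                ≤ (Rx.image Fin.succ ∪ Ry.image Fin.succ).card + 1 :=
                  Finset.card_insert_le _ _
              _ ≤ (Rx.image Fin.succ).card + (Ry.image Fin.succ).card + 1 := by
                  have := Finset.card_union_le (Rx.image Fin.succ) (Ry.image Fin.succ)
                  omega
              _ ≤ 2 * s - 1 := by
                  have h1 := le_trans (Finset.card_image_le (f := Fin.succ) (s := Rx)) hRx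
                  have h2 := le_trans (Finset.card_image_le (f := Fin.succ) (s := Ry)) hRy
                  omega
          · subst hf
            intro p q hpq
            have h0 : p 0 = q 0 := hpq 0 (Finset.mem_insert_self _ _)
            have hx' : x (Fin.tail p) = x (Fin.tail q) :=
              hpx _ _ fun j hj => hpq j.succ
                (Finset.mem_insert_of_mem (Finset.mem_union_left _ (Finset.mem_image_of_mem _ hj)))
            have hy' : y (Fin.tail p) = y (Fin.tail q) :=
              hpy _ _ fun j hj => hpq j.succ
                (Finset.mem_insert_of_mem (Finset.mem_union_right _ (Finset.mem_image_of_mem _ hj)))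
            simp only [h0, hx', hy']

lemma cube_card (m : ℕ) (R : Finset (Fin m)) (p₀ : Fin m → ZMod 2) :
    2 ^ (m - R.card) ≤ (Finset.univ.filter (fun p : Fin m → ZMod 2 => ∀ i ∈ R, p i = p₀ i)).card := by
  classical
  have : Fintype.card ({i : Fin m // i ∉ R} → ZMod 2) ≤
      (Finset.univ.filter (fun p : Fin m → ZMod 2 => ∀ i ∈ R, p i = p₀ i)).card := by
    rw [← Fintype.card_coe (Finset.univ.filter (fun p : Fin m → ZMod 2 => ∀ i ∈ R, p i = p₀ i))]
    apply Fintype.card_le_of_injective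
      (fun g => ⟨fun i => if h : i ∈ R then p₀ i else g ⟨i, h⟩, by
        simp only [Finset.mem_filter, Finset.mem_univ, true_and]
        intro i hi; simp [hi]⟩)
    intro g g' hgg'
    have h := congrArg Subtype.val hgg'
    funext i
    have := congrFun h i.1
    simpa [i.2] using this
  refine le_trans ?_ this
  rw [Fintype.card_fun]
  have hcompl : Fintype.card {i : Fin m // i ∉ R} = m - R.card := by
    have := Fintype.card_subtype_compl (p := fun i : Fin m => i ∈ R)
    simpa [Fintype.card_subtype] using this
  rw [hcompl]
  simp

lemma pow_split (m c : ℕ) : 2 ^ m ≤ 2 ^ c * 2 ^ (m - c) := by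
  rw [← pow_add]
  exact Nat.pow_le_pow_right (by norm_num) (by omega)

lemma mask_dist (m s : ℕ) (hs : 2 ≤ s) {u v : (Fin m → ZMod 2) → ZMod 2}
    (hu : u ∈ maskSet m s) (hv : v ∈ maskSet m s) (huv : u ≠ v) :
    2 ^ m ≤ 2 ^ (4 * s) * (Finset.univ.filter (fun p : Fin m → ZMod 2 => u p ≠ v p)).card := by
  classical
  obtain ⟨Ru, hRu, hpu⟩ := junta m s u (by omega) hu
  obtain ⟨Rv, hRv, hpv⟩ := junta m s v (by omega) hv
  have hRcard : (Ru ∪ Rv).card ≤ 4 * s := by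
    have := Finset.card_union_le Ru Rv
    omega
  obtain ⟨p₀, hp₀⟩ : ∃ p₀, u p₀ ≠ v p₀ := by
    by_contra h
    push_neg at h
    exact huv (funext h)
  have hsub : (Finset.univ.filter (fun p : Fin m → ZMod 2 => ∀ i ∈ Ru ∪ Rv, p i = p₀ i)) ⊆
      (Finset.univ.filter (fun p : Fin m → ZMod 2 => u p ≠ v p)) := by
    intro p hp
    simp only [Finset.mem_filter, Finset.mem_univ, true_and] at hp ⊢
    have h1 : u p = u p₀ := hpu p p₀ fun i hi => hp i (Finset.mem_union_left _ hi)
    have h2 : v p = v p₀ := hpv p p₀ fun i hi => hp i (Finset.mem_union_right _ hi)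
    rw [h1, h2]; exact hp₀
  have hcube := cube_card m (Ru ∪ Rv) p₀
  have hle := le_trans hcube (Finset.card_le_card hsub)
  have step1 : 2 ^ m ≤ 2 ^ (Ru ∪ Rv).card * 2 ^ (m - (Ru ∪ Rv).card) := pow_split m _
  have step2 : 2 ^ (Ru ∪ Rv).card * 2 ^ (m - (Ru ∪ Rv).card) ≤
      2 ^ (4 * s) * (Finset.univ.filter (fun p : Fin m → ZMod 2 => u p ≠ v p)).card :=
    Nat.mul_le_mul (Nat.pow_le_pow_right (by norm_num) hRcard) hle
  exact le_trans step1 step2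

lemma exists_enum {α : Type*} [Nonempty α] (K : ℕ) (R : Finset α) (hR : R.card ≤ K) :
    ∃ f : Fin K → α, ∀ a ∈ R, ∃ j, f j = a := by
  classical
  refine ⟨fun j => R.toList.getD j (Classical.arbitrary α), fun a ha => ?_⟩
  have hmem : a ∈ R.toList := by rwa [Finset.mem_toList]
  obtain ⟨n, hn, hget⟩ := List.mem_iff_getElem.mp hmem
  have hlen : R.toList.length = R.card := Finset.length_toList R
  refine ⟨⟨n, by omega⟩, ?_⟩
  simp only [List.getD_eq_getElem?_getD]
  rw [List.getElem?_eq_getElem (by omega)]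
  simpa using hget

lemma mask_repr (m s : ℕ) (hm : 1 ≤ m) (hs : 1 ≤ s) (v : (Fin m → ZMod 2) → ZMod 2)
    (hv : v ∈ maskSet m s) :
    ∃ (f : Fin (2*s) → Fin m) (g : (Fin (2*s) → ZMod 2) → ZMod 2),
      ∀ p, v p = g (fun j => p (f j)) := by
  classical
  have : Nonempty (Fin m) := ⟨⟨0, by omega⟩⟩
  obtain ⟨R, hRcard, hjunta⟩ := junta m s v hs hv
  obtain ⟨f, hf⟩ := exists_enum (2*s) R (by omega)
  refine ⟨f, fun b => v (fun i => if h : ∃ j, f j = i then b h.choose else 0), fun p => ?_⟩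
  apply hjunta
  intro i hi
  have h : ∃ j, f j = i := hf i hi
  simp only [dif_pos h]
  rw [h.choose_spec]

lemma mask_count (m s : ℕ) (hm : 1 ≤ m) (hs : 1 ≤ s) :
    Nat.card (maskSet m s) ≤ m ^ (2*s) * 2 ^ (2 ^ (2*s)) := by
  classical
  have hex : ∀ v : maskSet m s, ∃ (fg : (Fin (2*s) → Fin m) × ((Fin (2*s) → ZMod 2) → ZMod 2)),
      ∀ p, v.1 p = fg.2 (fun j => p (fg.1 j)) := by
    rintro ⟨v, hv⟩
    obtain ⟨f, g, hfg⟩ := mask_repr m s hm hs v hv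
    exact ⟨(f, g), hfg⟩
  choose Φ hΦ using hex
  have hinj : Function.Injective Φ := by
    rintro ⟨u, hu⟩ ⟨v, hv⟩ h
    ext p
    have h1 := hΦ ⟨u, hu⟩ p
    have h2 := hΦ ⟨v, hv⟩ p
    rw [h1, h2, h]
  calc Nat.card (maskSet m s)
      ≤ Nat.card ((Fin (2*s) → Fin m) × ((Fin (2*s) → ZMod 2) → ZMod 2)) :=
        Nat.card_le_card_of_injective Φ hinj
    _ = m ^ (2*s) * 2 ^ (2 ^ (2*s)) := by
        simp [Nat.card_eq_fintype_card, Fintype.card_fun]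

abbrev Pt (m : ℕ) := Fin m → ZMod 2

def badPairs (m : ℕ) (S : Finset (Pt m → ZMod 2)) (L : Finset (Pt m)) :
    Finset ((Pt m → ZMod 2) × (Pt m → ZMod 2)) :=
  (S ×ˢ S).filter (fun uv => uv.1 ≠ uv.2 ∧ ∀ i ∈ L, uv.1 i = uv.2 i)

lemma badPairs_insert (m : ℕ) (S : Finset (Pt m → ZMod 2)) (L : Finset (Pt m)) (p : Pt m) :
    badPairs m S (insert p L) = (badPairs m S L).filter (fun uv => uv.1 p = uv.2 p) := by
  unfold badPairs
  rw [Finset.filter_filter]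
  apply Finset.filter_congr
  intro uv _
  simp only [Finset.mem_insert]
  constructor
  · rintro ⟨h1, h2⟩
    exact ⟨⟨h1, fun i hi => h2 i (Or.inr hi)⟩, h2 p (Or.inl rfl)⟩
  · rintro ⟨⟨h1, h2⟩, h3⟩
    refine ⟨h1, fun i hi => ?_⟩
    rcases hi with rfl | hi
    · exact h3
    · exact h2 i hi

lemma greedy_step (m c : ℕ) (S : Finset (Pt m → ZMod 2))
    (hdist : ∀ u ∈ S, ∀ v ∈ S, u ≠ v →
      2 ^ m ≤ 2 ^ c * (Finset.univ.filter (fun p : Pt m => u p ≠ v p)).card)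
    (L : Finset (Pt m)) (hne : (badPairs m S L).card ≠ 0) :
    ∃ p : Pt m, (badPairs m S L).card ≤
      2 ^ c * ((badPairs m S L).filter (fun uv => uv.1 p ≠ uv.2 p)).card := by
  classical
  by_contra hcon
  push_neg at hcon
  set n := (badPairs m S L).card with hn
  -- double counting
  have hsum : ∀ uv ∈ badPairs m S L,
      2 ^ m ≤ 2 ^ c * (Finset.univ.filter (fun p : Pt m => uv.1 p ≠ uv.2 p)).card := by
    intro uv huv
    unfold badPairs at huv
    rw [Finset.mem_filter, Finset.mem_product] at huv
    exact hdist uv.1 huv.1.1 uv.2 huv.1.2 huv.2.1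
  have hdouble : ∑ p : Pt m, ((badPairs m S L).filter (fun uv => uv.1 p ≠ uv.2 p)).card
      = ∑ uv ∈ badPairs m S L, (Finset.univ.filter (fun p : Pt m => uv.1 p ≠ uv.2 p)).card := by
    simp only [Finset.card_filter]
    rw [Finset.sum_comm]
  have hlower : n * 2 ^ m ≤
      2 ^ c * ∑ p : Pt m, ((badPairs m S L).filter (fun uv => uv.1 p ≠ uv.2 p)).card := by
    rw [hdouble, Finset.mul_sum]
    calc n * 2 ^ m = ∑ _uv ∈ badPairs m S L, 2 ^ m := by rw [Finset.sum_const, hn]; ring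
      _ ≤ ∑ uv ∈ badPairs m S L,
          2 ^ c * (Finset.univ.filter (fun p : Pt m => uv.1 p ≠ uv.2 p)).card :=
        Finset.sum_le_sum hsum
  have hupper : 2 ^ c * ∑ p : Pt m, ((badPairs m S L).filter (fun uv => uv.1 p ≠ uv.2 p)).card
      ≤ 2 ^ m * (n - 1) := by
    rw [Finset.mul_sum]
    calc ∑ p : Pt m, 2 ^ c * ((badPairs m S L).filter (fun uv => uv.1 p ≠ uv.2 p)).card
        ≤ ∑ _p : Pt m, (n - 1) := Finset.sum_le_sum (fun p _ => by
          have := hcon p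
          omega)
      _ = 2 ^ m * (n - 1) := by
          rw [Finset.sum_const]
          simp [Fintype.card_fun]
  have : n * 2 ^ m ≤ 2 ^ m * (n - 1) := le_trans hlower hupper
  have h2m : 0 < 2 ^ m := Nat.pow_pos (by norm_num)
  nlinarith [Nat.sub_lt (Nat.pos_of_ne_zero hne) (show 0 < 1 by norm_num)]

lemma greedy_main (m c : ℕ) (S : Finset (Pt m → ZMod 2))
    (hdist : ∀ u ∈ S, ∀ v ∈ S, u ≠ v →
      2 ^ m ≤ 2 ^ c * (Finset.univ.filter (fun p : Pt m => u p ≠ v p)).card) :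
    ∀ (t : ℕ) (L : Finset (Pt m)),
      (badPairs m S L).card * (2 ^ c - 1) ^ t < (2 ^ c) ^ t →
      ∃ L' : Finset (Pt m), L'.card ≤ L.card + t ∧ (badPairs m S L').card = 0 := by
  intro t
  induction t with
  | zero =>
    intro L hL
    simp only [pow_zero, mul_one] at hL
    exact ⟨L, by omega, by omega⟩
  | succ t ih =>
    intro L hL
    by_cases hne : (badPairs m S L).card = 0
    · exact ⟨L, by omega, hne⟩
    · obtain ⟨p, hp⟩ := greedy_step m c S hdist L hne
      set n := (badPairs m S L).card with hn
      set k := ((badPairs m S L).filter (fun uv => uv.1 p ≠ uv.2 p)).card with hk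
      have hsplit : ((badPairs m S L).filter (fun uv => uv.1 p = uv.2 p)).card + k = n := by
        rw [hk, hn]
        simpa using Finset.card_filter_add_card_filter_not
          (s := badPairs m S L) (p := fun uv => uv.1 p = uv.2 p)
      have hins : (badPairs m S (insert p L)).card + k = n := by
        rw [badPairs_insert]; exact hsplit
      set n' := (badPairs m S (insert p L)).card with hn'
      have hstep : 2 ^ c * n' ≤ (2 ^ c - 1) * n := by
        have hexp : 2 ^ c * n = 2 ^ c * n' + 2 ^ c * k := by
          rw [← hins]; ring
        rw [Nat.sub_mul, one_mul]
        apply Nat.le_sub_of_add_le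
        rw [hexp]
        exact Nat.add_le_add_left hp _
      have hinv : n' * (2 ^ c - 1) ^ t < (2 ^ c) ^ t := by
        have hpos : 0 < 2 ^ c := Nat.pow_pos (by norm_num)
        have hmul : 2 ^ c * (n' * (2 ^ c - 1) ^ t) < 2 ^ c * (2 ^ c) ^ t := by
          calc 2 ^ c * (n' * (2 ^ c - 1) ^ t) = (2 ^ c * n') * (2 ^ c - 1) ^ t := by ring
            _ ≤ ((2 ^ c - 1) * n) * (2 ^ c - 1) ^ t := Nat.mul_le_mul_right _ hstep
            _ = n * (2 ^ c - 1) ^ (t + 1) := by ring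
            _ < (2 ^ c) ^ (t + 1) := hL
            _ = 2 ^ c * (2 ^ c) ^ t := by ring
        exact Nat.lt_of_mul_lt_mul_left hmul
      obtain ⟨L', hL'card, hL'⟩ := ih (insert p L) hinv
      refine ⟨L', ?_, hL'⟩
      have := Finset.card_insert_le p L
      omega

lemma halve (x : ℕ) (hx : 2 ≤ x) : 2 * (x - 1) ^ x ≤ x ^ x := by
  have hx1 : (1:ℝ) ≤ (x:ℝ) - 1 := by
    have : (2:ℝ) ≤ (x:ℝ) := by exact_mod_cast hx
    linarith
  have hpos : (0:ℝ) < (x:ℝ) - 1 := by linarith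
  set a : ℝ := 1 / ((x:ℝ) - 1) with ha
  have hapos : 0 < a := by positivity
  have hbern : 1 + (x:ℝ) * a ≤ (1 + a) ^ x := by
    apply one_add_mul_le_pow
    linarith
  have hxa : 1 ≤ (x:ℝ) * a := by
    rw [ha]
    rw [mul_one_div, le_div_iff₀ hpos]
    linarith
  have h2 : (2:ℝ) ≤ (1 + a) ^ x := by linarith
  have hkey : (2:ℝ) * ((x:ℝ) - 1) ^ x ≤ (x:ℝ) ^ x := by
    have hmul : (2:ℝ) * ((x:ℝ) - 1) ^ x ≤ (1 + a) ^ x * ((x:ℝ) - 1) ^ x := by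
      apply mul_le_mul_of_nonneg_right h2 (by positivity)
    have heq : (1 + a) ^ x * ((x:ℝ) - 1) ^ x = (x:ℝ) ^ x := by
      rw [← mul_pow]
      congr 1
      rw [ha]
      field_simp
      ring
    linarith [hmul, heq.le, heq.ge]
  have hcast : ((x:ℝ) - 1) = ((x - 1 : ℕ) : ℝ) := by
    have h1x : (1:ℕ) ≤ x := by omega
    push_cast [h1x]
    ring
  rw [hcast] at hkey
  exact_mod_cast hkey

lemma choose_t (c N : ℕ) :
    N * (2 ^ c - 1) ^ (2 ^ c * (Nat.log 2 N + 1)) < (2 ^ c) ^ (2 ^ c * (Nat.log 2 N + 1)) := by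
  by_cases hc : 1 ≤ c
  case neg =>
    have hc0 : c = 0 := by omega
    subst hc0
    have h1 : (2:ℕ) ^ 0 - 1 = 0 := by norm_num
    have h2 : (2:ℕ) ^ 0 = 1 := by norm_num
    rw [h1, h2, zero_pow (by omega : 1 * (Nat.log 2 N + 1) ≠ 0), one_pow]
    omega
  case pos =>
  set x := 2 ^ c with hxdef
  have hx2 : 2 ≤ x := by
    rw [hxdef]
    calc 2 = 2 ^ 1 := (pow_one 2).symm
      _ ≤ 2 ^ c := Nat.pow_le_pow_right (by norm_num) hc
  set q := Nat.log 2 N + 1 with hq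
  have hN : N < 2 ^ q := Nat.lt_pow_succ_log_self (by norm_num) N
  have hxm1pos : 0 < (x - 1) ^ (x * q) := Nat.pow_pos (by omega)
  calc N * (x - 1) ^ (x * q) < 2 ^ q * (x - 1) ^ (x * q) :=
        (Nat.mul_lt_mul_right hxm1pos).mpr hN
    _ = (2 * (x - 1) ^ x) ^ q := by
        rw [mul_pow, ← pow_mul, Nat.mul_comm x q]
    _ ≤ (x ^ x) ^ q := Nat.pow_le_pow_left (halve x hx2) q
    _ = x ^ (x * q) := by rw [← pow_mul, Nat.mul_comm x q]

lemma Lmin_nonempty (m s : ℕ) :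
    {k | ∃ L : Finset (Fin m → ZMod 2), L.card = k ∧ Distinguishes L (maskSet m s)}.Nonempty := by
  classical
  refine ⟨(Finset.univ : Finset (Fin m → ZMod 2)).card, Finset.univ, rfl, ?_⟩
  intro x _ y _ h
  funext p
  exact h p (Finset.mem_univ p)

lemma Lmin_upper (m s : ℕ) (hs : 2 ≤ s) (hm : 1 ≤ m) :
    Lmin s m ≤ 2 ^ (4*s) * (Nat.log 2 ((m ^ (2*s) * 2 ^ (2 ^ (2*s))) ^ 2) + 1) := by
  classical
  set B := m ^ (2*s) * 2 ^ (2 ^ (2*s)) with hB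
  set S := (maskSet m s).toFinset with hS
  have hmem : ∀ v, v ∈ S ↔ v ∈ maskSet m s := fun v => Set.mem_toFinset
  have hScard : S.card ≤ B := by
    rw [hS, Set.toFinset_card, ← Nat.card_eq_fintype_card]
    exact mask_count m s hm (by omega)
  have hdist : ∀ u ∈ S, ∀ v ∈ S, u ≠ v →
      2 ^ m ≤ 2 ^ (4*s) * (Finset.univ.filter (fun p : Pt m => u p ≠ v p)).card := by
    intro u hu v hv huv
    exact mask_dist m s hs ((hmem u).mp hu) ((hmem v).mp hv) huv
  have hNbound : (badPairs m S ∅).card ≤ B ^ 2 := by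
    calc (badPairs m S ∅).card ≤ (S ×ˢ S).card := Finset.card_le_card (Finset.filter_subset _ _)
      _ = S.card * S.card := Finset.card_product S S
      _ ≤ B * B := Nat.mul_le_mul hScard hScard
      _ = B ^ 2 := (sq B).symm
  set t := 2 ^ (4*s) * (Nat.log 2 (B ^ 2) + 1) with ht
  have hcond : (badPairs m S ∅).card * (2 ^ (4*s) - 1) ^ t < (2 ^ (4*s)) ^ t := by
    calc (badPairs m S ∅).card * (2 ^ (4*s) - 1) ^ t ≤ B ^ 2 * (2 ^ (4*s) - 1) ^ t :=
          Nat.mul_le_mul_right _ hNbound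
      _ < (2 ^ (4*s)) ^ t := choose_t (4*s) (B ^ 2)
  obtain ⟨L', hL'card, hL'zero⟩ := greedy_main m (4*s) S hdist t ∅ hcond
  have hdisting : Distinguishes L' (maskSet m s) := by
    intro x hx y hy hagree
    by_contra hxy
    have hmemBad : (x, y) ∈ badPairs m S L' := by
      unfold badPairs
      rw [Finset.mem_filter, Finset.mem_product]
      exact ⟨⟨(hmem x).mpr hx, (hmem y).mpr hy⟩, hxy, hagree⟩
    have := Finset.card_pos.mpr ⟨(x, y), hmemBad⟩
    omega
  have hmemSet : L'.card ∈
      {k | ∃ L : Finset (Fin m → ZMod 2), L.card = k ∧ Distinguishes L (maskSet m s)} :=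
    ⟨L', rfl, hdisting⟩
  calc Lmin s m ≤ L'.card := Nat.sInf_le hmemSet
    _ ≤ t := by simpa using hL'card

lemma Lmin_lower (m s : ℕ) (hs : 2 ≤ s) : m + 1 ≤ 2 ^ Lmin s m := by
  classical
  have hmem := Nat.sInf_mem (Lmin_nonempty m s)
  obtain ⟨L, hLcard, hLdist⟩ := hmem
  set δ : Fin m → Pt m := fun k => fun i => if i = k then 1 else 0 with hδ
  have hcoord_inj : Function.Injective (fun k : Fin m => (fun p : Pt m => p k)) := by
    intro k j hkj
    by_contra hne
    have := congrFun hkj (δ k)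
    simp only [hδ] at this
    simp [Ne.symm hne] at this
  set T : Finset (Pt m → ZMod 2) :=
    insert (fun _ => (0:ZMod 2)) ((Finset.univ : Finset (Fin m)).image
      (fun k => fun p : Pt m => p k)) with hT
  have hTcard : T.card = m + 1 := by
    rw [hT, Finset.card_insert_of_notMem, Finset.card_image_of_injective _ hcoord_inj]
    · simp
    · intro hmem'
      rw [Finset.mem_image] at hmem'
      obtain ⟨k, _, hk⟩ := hmem'
      have := congrFun hk (δ k)
      simp [hδ] at this
  have hTsub : ∀ v ∈ T, v ∈ maskSet m s := by
    intro v hv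
    rw [hT, Finset.mem_insert] at hv
    rcases hv with rfl | hv
    · exact const_mem m s (by omega) 0
    · rw [Finset.mem_image] at hv
      obtain ⟨k, _, rfl⟩ := hv
      exact coord_mem m s hs k
  have hinj : Set.InjOn (fun v : Pt m → ZMod 2 => (fun i : ↥L => v i.1)) ↑T := by
    intro u hu v hv huv
    apply hLdist u (hTsub u (by exact_mod_cast hu)) v (hTsub v (by exact_mod_cast hv))
    intro i hi
    exact congrFun huv ⟨i, hi⟩
  have hcardle : T.card ≤ Fintype.card (↥L → ZMod 2) := by
    rw [← Finset.card_univ]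
    exact Finset.card_le_card_of_injOn _ (fun v _ => Finset.mem_univ _) hinj
  rw [hTcard] at hcardle
  calc m + 1 ≤ Fintype.card (↥L → ZMod 2) := hcardle
    _ = 2 ^ L.card := by rw [Fintype.card_fun]; simp
    _ = 2 ^ Lmin s m := by rw [hLcard]; rfl

/-- For fixed `s ≥ 2`, the minimal label size grows as `Θ(log₂ m)`
(equivalently `Θ(log log n)` in the code length `n = 2^m`). -/
theorem Lmin_theta_log (s : ℕ) (hs : 2 ≤ s) :
    ∃ c₁ c₂ : ℝ, 0 < c₁ ∧ 0 < c₂ ∧ ∃ m₀ : ℕ, ∀ m : ℕ, m₀ ≤ m →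
      c₁ * Real.logb 2 m ≤ (Lmin s m : ℝ) ∧ (Lmin s m : ℝ) ≤ c₂ * Real.logb 2 m := by
  refine ⟨1, (2:ℝ)^(4*s) * ((4*s : ℕ) + 2^(2*s+1) + 1), one_pos, by positivity, 2, ?_⟩
  intro m hm
  have hm0 : (0:ℝ) < m := by exact_mod_cast (by omega : 0 < m)
  have hm2 : (2:ℝ) ≤ m := by exact_mod_cast hm
  have hlogm : (1:ℝ) ≤ Real.logb 2 m := by
    have h : Real.logb 2 2 ≤ Real.logb 2 (m:ℝ) := Real.logb_le_logb_of_le (by norm_num) (by norm_num) hm2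
    rwa [Real.logb_self_eq_one (by norm_num)] at h
  constructor
  · -- lower bound
    have hlow := Lmin_lower m s hs
    have hcast : ((m:ℝ) + 1) ≤ (2:ℝ) ^ (Lmin s m) := by exact_mod_cast hlow
    have h1 : Real.logb 2 ((m:ℝ) + 1) ≤ Real.logb 2 ((2:ℝ) ^ (Lmin s m)) :=
      Real.logb_le_logb_of_le (by norm_num) (by positivity) hcast
    rw [Real.logb_pow, Real.logb_self_eq_one (by norm_num), mul_one] at h1
    have h2 : Real.logb 2 m ≤ Real.logb 2 ((m:ℝ) + 1) :=
      Real.logb_le_logb_of_le (by norm_num) hm0 (by linarith)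
    rw [one_mul]
    linarith
  · -- upper bound
    have hup := Lmin_upper m s hs (by omega)
    set B := m ^ (2*s) * 2 ^ (2 ^ (2*s)) with hB
    have hBpos : 0 < B := by
      rw [hB]
      have : 0 < m ^ (2*s) := Nat.pow_pos (by omega)
      positivity
    have hlogB : (Nat.log 2 (B ^ 2) : ℝ) ≤ 4*s * Real.logb 2 m + 2^(2*s+1) := by
      have hN0 : B ^ 2 ≠ 0 := by positivity
      have hple : (2:ℕ) ^ (Nat.log 2 (B ^ 2)) ≤ B ^ 2 := Nat.pow_log_le_self 2 hN0
      have hple' : (2:ℝ) ^ (Nat.log 2 (B ^ 2)) ≤ ((B:ℝ)) ^ 2 := by exact_mod_cast hple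
      have h1 : Real.logb 2 ((2:ℝ) ^ (Nat.log 2 (B ^ 2))) ≤ Real.logb 2 ((B:ℝ) ^ 2) :=
        Real.logb_le_logb_of_le (by norm_num) (by positivity) hple'
      rw [Real.logb_pow, Real.logb_self_eq_one (by norm_num), mul_one] at h1
      have hBcast : (B:ℝ) = (m:ℝ) ^ (2*s) * 2 ^ (2 ^ (2*s)) := by
        rw [hB]; push_cast; ring
      have h2 : Real.logb 2 ((B:ℝ) ^ 2) = 2 * Real.logb 2 (B:ℝ) := by
        rw [Real.logb_pow]; norm_num
      have h3 : Real.logb 2 (B:ℝ) = 2*s * Real.logb 2 m + 2^(2*s) := by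
        rw [hBcast, Real.logb_mul (by positivity) (by positivity),
          Real.logb_pow, Real.logb_pow, Real.logb_self_eq_one (by norm_num)]
        push_cast
        ring
      rw [h2, h3] at h1
      calc (Nat.log 2 (B ^ 2) : ℝ) ≤ 2 * (2*s * Real.logb 2 m + 2^(2*s)) := h1
        _ = 4*s * Real.logb 2 m + 2^(2*s+1) := by ring
    have hupR : (Lmin s m : ℝ) ≤ (2:ℝ)^(4*s) * ((Nat.log 2 (B ^ 2) : ℝ) + 1) := by
      have : (Lmin s m : ℝ) ≤ ((2 ^ (4*s) * (Nat.log 2 (B ^ 2) + 1) : ℕ) : ℝ) := by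
        exact_mod_cast hup
      calc (Lmin s m : ℝ) ≤ ((2 ^ (4*s) * (Nat.log 2 (B ^ 2) + 1) : ℕ) : ℝ) := this
        _ = (2:ℝ)^(4*s) * ((Nat.log 2 (B ^ 2) : ℝ) + 1) := by push_cast; ring
    calc (Lmin s m : ℝ) ≤ (2:ℝ)^(4*s) * ((Nat.log 2 (B ^ 2) : ℝ) + 1) := hupR
      _ ≤ (2:ℝ)^(4*s) * (4*s * Real.logb 2 m + 2^(2*s+1) + 1) := by
          apply mul_le_mul_of_nonneg_left (by linarith) (by positivity)
      _ ≤ (2:ℝ)^(4*s) * (((4*s : ℕ) + 2^(2*s+1) + 1) * Real.logb 2 m) := by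
          apply mul_le_mul_of_nonneg_left ?_ (by positivity)
          have hs0 : (0:ℝ) ≤ 4*s := by positivity
          have hp0 : (0:ℝ) ≤ 2^(2*s+1) := by positivity
          push_cast
          nlinarith [hlogm, hs0, hp0]
      _ = (2:ℝ)^(4*s) * ((4*s : ℕ) + 2^(2*s+1) + 1) * Real.logb 2 m := by ring
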